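/- arXiv:2103.01174 — 4 statements merged into one kernel-verified Lean document; each statement's English description precedes it below -/
import Mathlib

section
/- In the Iwahori–Hecke algebra of a Coxeter group W over ℤ[q] with standard basis {T_w}, each structure constant N_{w,w',w''} (defined by T_w T_{w'} = Σ_{w''} N_{w,w',w''} T_{w''}) is a polynomial in q and q−1 with nonnegative integer coefficients. -/
/-! For a simple reflection `s` the quadratic relation gives `T_s T_u = T_{su}` when `su` is
longer than `u` and `T_s T_u = q T_{su} + (q - 1) T_u` when it is shorter. So left
multiplication by `T_s` preserves the elements whose coordinates all lie in the semiring
generated by `q` and `q - 1`. Factoring `T_w = T_s T_{sw}` with `ℓ(sw) < ℓ(w)`, induction on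
`ℓ(w)` puts every coordinate of `T_w T_{w'}` in that semiring, whose elements are exactly the
nonnegative integer combinations of the monomials `q^i (q - 1)^j`. -/

open Polynomial

/-- The structure constants of the Iwahori–Hecke algebra: `heckeN T w w' w''` is the
coefficient of `T w''` in `T w * T w'`. -/
noncomputable def heckeN {W H : Type*} [Group W] [Ring H] [Algebra (Polynomial ℤ) H]
    (T : Module.Basis W (Polynomial ℤ) H) (w w' w'' : W) : Polynomial ℤ :=
  T.repr (T w * T w') w''

variable {B W H : Type*} [Group W] {M : CoxeterMatrix B}

theorem Subsemiring.exists_finsupp_of_mem_closure_pair {R : Type*} [CommSemiring R] {x y p : R}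
    (hp : p ∈ Subsemiring.closure {x, y}) :
    ∃ c : (ℕ × ℕ) →₀ ℕ, p = c.sum fun e a => (a : R) * x ^ e.1 * y ^ e.2 := by
  rw [Subsemiring.mem_closure_iff] at hp
  induction hp using AddSubmonoid.closure_induction with
  | mem m hm =>
    obtain ⟨i, j, rfl⟩ := (Submonoid.mem_closure_pair x y m).mp hm
    exact ⟨Finsupp.single (i, j) 1, by simp⟩
  | zero => exact ⟨0, by simp⟩
  | add a b _ _ ha hb =>
    obtain ⟨c, rfl⟩ := ha
    obtain ⟨d, rfl⟩ := hb
    exact ⟨c + d, (Finsupp.sum_add_index' (fun _ => by simp) fun _ _ _ => by push_cast; ring).symm⟩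

namespace Module.Basis

variable {ι R A : Type*} [CommSemiring R] [Semiring A] [Algebra R A] (b : Basis ι R A)
  (S : Subsemiring R)

theorem repr_self_apply_mem (i j : ι) : b.repr (b i) j ∈ S := by
  classical
  rw [repr_self_apply]
  split_ifs
  exacts [S.one_mem, S.zero_mem]

theorem repr_mul_apply_mem {a x : A} (ha : ∀ i j, b.repr (a * b i) j ∈ S)
    (hx : ∀ i, b.repr x i ∈ S) (j : ι) : b.repr (a * x) j ∈ S := by
  rw [← b.linearCombination_repr x, Finsupp.linearCombination_apply, Finsupp.mul_sum,
    map_finsuppSum, Finsupp.sum_apply]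
  refine sum_mem fun i _ => ?_
  dsimp only
  rw [mul_smul_comm, map_smul, Finsupp.smul_apply, smul_eq_mul]
  exact S.mul_mem (hx i) (ha i j)

end Module.Basis

theorem mul_self_eq_of_add_one_mul_sub_eq_zero {R A : Type*} [CommRing R] [Ring A] [Algebra R A]
    {t : A} {q : R} (h : (t + 1) * (t - algebraMap R A q) = 0) :
    t * t = (q - 1) • t + q • 1 := by
  rw [Algebra.algebraMap_eq_smul_one] at h
  rw [sub_smul, one_smul, ← sub_eq_zero, ← h]
  simp only [add_mul, mul_sub, mul_smul_one, one_mul, smul_add]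
  abel

namespace CoxeterSystem

variable {R : Type*} [CommRing R] [Ring H] [Algebra R H] (cs : CoxeterSystem M W)
  {T : Module.Basis W R H} {q : R}

theorem hecke_simple_mul_of_not_isLeftDescent
    (hmul : ∀ y y' : W, cs.length (y * y') = cs.length y + cs.length y' →
      T y * T y' = T (y * y'))
    {u : W} {i : B} (hu : ¬cs.IsLeftDescent u i) :
    T (cs.simple i) * T u = T (cs.simple i * u) :=
  hmul _ _ <| by rw [cs.length_simple, cs.not_isLeftDescent_iff.mp hu, add_comm]

theorem hecke_simple_mul_of_isLeftDescent
    (hmul : ∀ y y' : W, cs.length (y * y') = cs.length y + cs.length y' →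
      T y * T y' = T (y * y'))
    (hquad : ∀ i : B, (T (cs.simple i) + 1) * (T (cs.simple i) - algebraMap R H q) = 0)
    {u : W} {i : B} (hu : cs.IsLeftDescent u i) :
    T (cs.simple i) * T u = q • T (cs.simple i * u) + (q - 1) • T u := by
  have hsu : T (cs.simple i) * T (cs.simple i * u) = T u := by
    rw [cs.hecke_simple_mul_of_not_isLeftDescent hmul
      (cs.isLeftDescent_iff_not_isLeftDescent_mul.mp hu), cs.simple_mul_simple_cancel_left]
  rw [← hsu, ← mul_assoc, mul_self_eq_of_add_one_mul_sub_eq_zero (hquad i), add_mul,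
    smul_mul_assoc, smul_mul_assoc, one_mul, hsu, add_comm]

theorem hecke_repr_simple_mul_mem
    (hmul : ∀ y y' : W, cs.length (y * y') = cs.length y + cs.length y' →
      T y * T y' = T (y * y'))
    (hquad : ∀ i : B, (T (cs.simple i) + 1) * (T (cs.simple i) - algebraMap R H q) = 0)
    (i : B) (u v : W) :
    T.repr (T (cs.simple i) * T u) v ∈ Subsemiring.closure {q, q - 1} := by
  set S := Subsemiring.closure {q, q - 1}
  by_cases hu : cs.IsLeftDescent u i
  · rw [cs.hecke_simple_mul_of_isLeftDescent hmul hquad hu]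
    simp only [map_add, map_smul, Finsupp.add_apply, Finsupp.smul_apply, smul_eq_mul]
    exact S.add_mem
      (S.mul_mem (Subsemiring.subset_closure (by simp)) (T.repr_self_apply_mem S _ _))
      (S.mul_mem (Subsemiring.subset_closure (by simp)) (T.repr_self_apply_mem S _ _))
  · rw [cs.hecke_simple_mul_of_not_isLeftDescent hmul hu]
    exact T.repr_self_apply_mem S _ _

theorem hecke_repr_mul_mem
    (hmul : ∀ y y' : W, cs.length (y * y') = cs.length y + cs.length y' →
      T y * T y' = T (y * y'))
    (hquad : ∀ i : B, (T (cs.simple i) + 1) * (T (cs.simple i) - algebraMap R H q) = 0)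
    (w w' v : W) :
    T.repr (T w * T w') v ∈ Subsemiring.closure {q, q - 1} := by
  rcases eq_or_ne w 1 with rfl | hw
  · rw [hmul 1 w' (by simp), one_mul]
    exact T.repr_self_apply_mem _ _ _
  · obtain ⟨i, hi⟩ := cs.exists_leftDescent_of_ne_one hw
    have hTw : T w = T (cs.simple i) * T (cs.simple i * w) := by
      rw [cs.hecke_simple_mul_of_not_isLeftDescent hmul
        (cs.isLeftDescent_iff_not_isLeftDescent_mul.mp hi), cs.simple_mul_simple_cancel_left]
    rw [hTw, mul_assoc]
    exact T.repr_mul_apply_mem _ (cs.hecke_repr_simple_mul_mem hmul hquad i)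
      (hecke_repr_mul_mem hmul hquad (cs.simple i * w) w') v
termination_by cs.length w
decreasing_by exact Nat.lt_of_succ_le (cs.isLeftDescent_iff.mp hi).le

end CoxeterSystem

theorem stmt_0_general (cs : CoxeterSystem M W)
    [Ring H] [Algebra (Polynomial ℤ) H] (T : Module.Basis W (Polynomial ℤ) H)
    (hmul : ∀ y y' : W, cs.length (y * y') = cs.length y + cs.length y' →
      T y * T y' = T (y * y'))
    (hquad : ∀ i : B, (T (cs.simple i) + 1) *
      (T (cs.simple i) - algebraMap (Polynomial ℤ) H X) = 0)
    (w w' w'' : W) :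
    ∃ c : (ℕ × ℕ) →₀ ℕ,
      heckeN T w w' w'' =
        c.sum (fun p a => (a : Polynomial ℤ) * X ^ p.1 * (X - 1) ^ p.2) :=
  Subsemiring.exists_finsupp_of_mem_closure_pair (cs.hecke_repr_mul_mem hmul hquad w w' w'')

/-- Each structure constant of the Iwahori–Hecke algebra is a polynomial in `q` and
`q - 1` with nonnegative integer coefficients. -/
theorem stmt_0 (cs : CoxeterSystem M W)
    [Ring H] [Algebra (Polynomial ℤ) H] (T : Module.Basis W (Polynomial ℤ) H)
    (hone : T 1 = 1)
    (hmul : ∀ y y' : W, cs.length (y * y') = cs.length y + cs.length y' →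
      T y * T y' = T (y * y'))
    (hquad : ∀ i : B, (T (cs.simple i) + 1) *
      (T (cs.simple i) - algebraMap (Polynomial ℤ) H X) = 0)
    (w w' w'' : W) :
    ∃ c : (ℕ × ℕ) →₀ ℕ,
      heckeN T w w' w'' =
        c.sum (fun p a => (a : Polynomial ℤ) * X ^ p.1 * (X - 1) ^ p.2) :=
  stmt_0_general cs T hmul hquad w w' w''
end

section
/- If W is a finite Coxeter group with longest element w₀, then for every w ∈ W the structure constant N_{w,w₀,w₀} of the Iwahori–Hecke algebra is nonzero; in particular the set 𝔈(w) = {z ∈ W : N_{w,z,z} ≠ 0} is nonempty and contains w₀. -/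
/-!
Left multiplication by `T s` acts on coefficients by `c_z ↦ (q - 1) c_z + c_{sz}` when `s` is a
left descent of `z`, and by `c_z ↦ q c_{sz}` otherwise. Evaluated at `q = 2` it therefore keeps
all coefficients nonnegative and does not decrease the coefficient at any `z` having `s` as a left
descent. Every simple reflection is a left descent of `w₀`, so starting from `T w₀` and multiplying
by the `T s` of a reduced word of `w`, the coefficient of `T w₀` in `T w * T w₀` stays at least `1`
at `q = 2`.
-/

open Polynomial

variable {B W H : Type*} [Group W] {M : CoxeterMatrix B}

def HasNonnegCoeffsAt {ι A : Type*} [Ring A] [Algebra ℤ[X] A] (b : Module.Basis ι ℤ[X] A)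
    (q : ℤ) (x : A) : Prop :=
  ∀ j : ι, 0 ≤ (b.repr x j).eval q

theorem hasNonnegCoeffsAt_basis {ι A : Type*} [Ring A] [Algebra ℤ[X] A]
    (b : Module.Basis ι ℤ[X] A) (q : ℤ) (i : ι) : HasNonnegCoeffsAt b q (b i) := fun j => by
  classical
  rw [b.repr_self, Finsupp.single_apply]
  split_ifs <;> simp

namespace CoxeterSystem

structure IsHeckeBasis [Ring H] [Algebra ℤ[X] H] (cs : CoxeterSystem M W)
    (T : Module.Basis W ℤ[X] H) : Prop where
  one : T 1 = 1
  mul_of_length_add : ∀ y y' : W, cs.length (y * y') = cs.length y + cs.length y' →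
    T y * T y' = T (y * y')
  quadratic : ∀ i : B, (T (cs.simple i) + 1) * (T (cs.simple i) - algebraMap ℤ[X] H X) = 0

theorem isLeftDescent_of_forall_length_le (cs : CoxeterSystem M W) {w₀ : W}
    (hw₀ : ∀ u : W, cs.length u ≤ cs.length w₀) (i : B) : cs.IsLeftDescent w₀ i :=
  (hw₀ _).lt_of_ne (cs.length_simple_mul_ne w₀ i)

namespace IsHeckeBasis

variable [Ring H] [Algebra ℤ[X] H] {cs : CoxeterSystem M W} {T : Module.Basis W ℤ[X] H}

theorem simple_mul_of_not_isLeftDescent (hT : IsHeckeBasis cs T) {i : B} {u : W}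
    (h : ¬cs.IsLeftDescent u i) : T (cs.simple i) * T u = T (cs.simple i * u) :=
  hT.mul_of_length_add _ _ <| by
    rw [cs.not_isLeftDescent_iff.mp h, cs.length_simple, add_comm]

theorem simple_mul_simple (hT : IsHeckeBasis cs T) (i : B) :
    T (cs.simple i) * T (cs.simple i) = (X - 1 : ℤ[X]) • T (cs.simple i) + (X : ℤ[X]) • 1 := by
  rw [← sub_eq_zero, ← hT.quadratic i, sub_smul, one_smul, Algebra.smul_def, Algebra.smul_def,
    Algebra.commutes]
  noncomm_ring

theorem simple_mul_of_isLeftDescent (hT : IsHeckeBasis cs T) {i : B} {u : W}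
    (h : cs.IsLeftDescent u i) :
    T (cs.simple i) * T u = (X - 1 : ℤ[X]) • T u + (X : ℤ[X]) • T (cs.simple i * u) := by
  have hu : T (cs.simple i) * T (cs.simple i * u) = T u := by
    rw [hT.simple_mul_of_not_isLeftDescent (cs.isLeftDescent_iff_not_isLeftDescent_mul.mp h),
      cs.simple_mul_simple_cancel_left]
  rw [← hu, ← mul_assoc, hT.simple_mul_simple, add_mul, smul_mul_assoc, smul_mul_assoc, one_mul]

open Classical in
theorem repr_simple_mul_apply (hT : IsHeckeBasis cs T) (i : B) (x : H) (z : W) :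
    T.repr (T (cs.simple i) * x) z =
      if cs.IsLeftDescent z i then (X - 1) * T.repr x z + T.repr x (cs.simple i * z)
      else X * T.repr x (cs.simple i * z) := by
  have key : (T.coord z).comp (LinearMap.mulLeft ℤ[X] (T (cs.simple i))) =
      if cs.IsLeftDescent z i then (X - 1 : ℤ[X]) • T.coord z + T.coord (cs.simple i * z)
      else (X : ℤ[X]) • T.coord (cs.simple i * z) := by
    refine T.ext fun u => ?_
    have hsu : cs.simple i * u = z ↔ u = cs.simple i * z := by
      constructor <;> rintro rfl <;> rw [cs.simple_mul_simple_cancel_left]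
    have hdesc : cs.IsLeftDescent (cs.simple i * z) i ↔ ¬cs.IsLeftDescent z i := by
      simpa only [cs.simple_mul_simple_cancel_left] using
        cs.isLeftDescent_iff_not_isLeftDescent_mul (w := cs.simple i * z) (i := i)
    by_cases hu : cs.IsLeftDescent u i <;> by_cases hz : cs.IsLeftDescent z i
    · have : u ≠ cs.simple i * z := by rintro rfl; exact hdesc.mp hu hz
      simp [hT.simple_mul_of_isLeftDescent hu, Finsupp.single_apply, hsu, hz, this, ite_sub_ite]
    · have : u ≠ z := by rintro rfl; exact hz hu
      simp [hT.simple_mul_of_isLeftDescent hu, Finsupp.single_apply, hsu, hz, this]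
    · have : u ≠ z := by rintro rfl; exact hu hz
      simp [hT.simple_mul_of_not_isLeftDescent hu, Finsupp.single_apply, hsu, hz, this]
    · have : u ≠ cs.simple i * z := by rintro rfl; exact hu (hdesc.mpr hz)
      simp [hT.simple_mul_of_not_isLeftDescent hu, hsu, hz, this]
  have := LinearMap.congr_fun key x
  split_ifs at this ⊢ <;> simpa using this

theorem hasNonnegCoeffsAt_simple_mul (hT : IsHeckeBasis cs T) {q : ℤ} (hq : 1 ≤ q) {x : H}
    (hx : HasNonnegCoeffsAt T q x) (i : B) : HasNonnegCoeffsAt T q (T (cs.simple i) * x) := by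
  intro z
  have := hx z
  have := hx (cs.simple i * z)
  rw [hT.repr_simple_mul_apply]
  split_ifs <;> simp only [eval_add, eval_mul, eval_sub, eval_X, eval_one] <;> nlinarith

theorem eval_repr_le_eval_repr_simple_mul (hT : IsHeckeBasis cs T) {q : ℤ} (hq : 2 ≤ q)
    {x : H} (hx : HasNonnegCoeffsAt T q x) {i : B} {z : W} (hz : cs.IsLeftDescent z i) :
    (T.repr x z).eval q ≤ (T.repr (T (cs.simple i) * x) z).eval q := by
  have := hx z
  have := hx (cs.simple i * z)
  rw [hT.repr_simple_mul_apply, if_pos hz]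
  simp only [eval_add, eval_mul, eval_sub, eval_X, eval_one]
  nlinarith

theorem basis_mul_of_simple_mul (hT : IsHeckeBasis cs T) {p : H → Prop}
    (simple_mul : ∀ (i : B) (y : H), p y → p (T (cs.simple i) * y)) (w : W) {x : H} (hx : p x) :
    p (T w * x) := by
  induction hw : cs.length w generalizing w with
  | zero => rwa [cs.length_eq_zero_iff.mp hw, hT.one, one_mul]
  | succ n ih =>
    obtain ⟨i, hi⟩ := cs.exists_leftDescent_of_ne_one (w := w) (by rintro rfl; simp at hw)
    have hTw : T w = T (cs.simple i) * T (cs.simple i * w) := by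
      rw [hT.simple_mul_of_not_isLeftDescent (cs.isLeftDescent_iff_not_isLeftDescent_mul.mp hi),
        cs.simple_mul_simple_cancel_left]
    rw [hTw, mul_assoc]
    exact simple_mul i _ (ih _ (by have := cs.isLeftDescent_iff.mp hi; omega))

end IsHeckeBasis

end CoxeterSystem

theorem stmt_1_general (cs : CoxeterSystem M W)
    [Ring H] [Algebra (Polynomial ℤ) H] (T : Module.Basis W (Polynomial ℤ) H)
    (hone : T 1 = 1)
    (hmul : ∀ y y' : W, cs.length (y * y') = cs.length y + cs.length y' →
      T y * T y' = T (y * y'))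
    (hquad : ∀ i : B, (T (cs.simple i) + 1) *
      (T (cs.simple i) - algebraMap (Polynomial ℤ) H X) = 0)
    (w₀ : W) (hw₀ : ∀ u : W, cs.length u ≤ cs.length w₀)
    (w : W) :
    heckeN T w w₀ w₀ ≠ 0 := by
  have hT : cs.IsHeckeBasis T := ⟨hone, hmul, hquad⟩
  obtain ⟨-, hle⟩ := hT.basis_mul_of_simple_mul
    (p := fun y => HasNonnegCoeffsAt T 2 y ∧ 1 ≤ (T.repr y w₀).eval 2)
    (fun i y ⟨hy, hle⟩ => ⟨hT.hasNonnegCoeffsAt_simple_mul one_le_two hy i,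
      hle.trans (hT.eval_repr_le_eval_repr_simple_mul le_rfl hy
        (cs.isLeftDescent_of_forall_length_le hw₀ i))⟩)
    w ⟨hasNonnegCoeffsAt_basis T 2 w₀, by simp⟩
  intro h
  rw [heckeN] at h
  simp [h] at hle

/-- In a finite Coxeter group with longest element `w₀`, for every `w` the structure
constant `N_{w,w₀,w₀}` is nonzero; in particular `w₀ ∈ 𝔈(w)`. -/
theorem stmt_1 [Fintype W] (cs : CoxeterSystem M W)
    [Ring H] [Algebra (Polynomial ℤ) H] (T : Module.Basis W (Polynomial ℤ) H)
    (hone : T 1 = 1)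
    (hmul : ∀ y y' : W, cs.length (y * y') = cs.length y + cs.length y' →
      T y * T y' = T (y * y'))
    (hquad : ∀ i : B, (T (cs.simple i) + 1) *
      (T (cs.simple i) - algebraMap (Polynomial ℤ) H X) = 0)
    (w₀ : W) (hw₀ : ∀ u : W, cs.length u ≤ cs.length w₀)
    (w : W) :
    heckeN T w w₀ w₀ ≠ 0 :=
  stmt_1_general cs T hone hmul hquad w₀ hw₀ w
end

section
/- Let W be the infinite dihedral Coxeter group with generators s₁, s₂ (s₁² = s₂² = 1, no other relations). For w = (s₁s₂)^k with k ≥ 1, the set 𝔈(w) = {z ∈ W : N_{w,z,z} ≠ 0} is empty. -/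
/-!
Let `s₁, s₂` act on `ℤ`, the alcoves `(t - 1/2, t + 1/2)` of the real line, by the reflections
`t ↦ -1 - t` and `t ↦ 1 - t`, and let `a(x)` be the image of the alcove `0` under `x`. Then
`ℓ(x) = |a(x)|`, so whether `sᵢ` raises or lowers the length of `x` is read off from the sign of
`a(x)`. With `F_m` the span of the `T_u` with `a(u) < m`, the Hecke relations then give
`T_{s₁} T_{s₂} T_x ∈ F_{a(x)}` for every `x`; hence every `F_m` is stable under left
multiplication by `T_{s₁} T_{s₂}`. Since `T_w = (T_{s₁} T_{s₂})^k` for `w = (s₁ s₂)^k`, the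
product `T_w T_z` lies in `F_{a(z)}` as soon as `k ≥ 1`, and `F_{a(z)}` does not involve `T_z`.
-/

open Polynomial

variable {B W H : Type*} [Group W] {M : CoxeterMatrix B}

theorem mul_self_eq_of_mul_sub_algebraMap_eq_zero {R A : Type*} [CommRing R] [Ring A]
    [Algebra R A] {t : A} {q : R} (h : (t + 1) * (t - algebraMap R A q) = 0) :
    t * t = (q - 1) • t + algebraMap R A q := by
  rw [Algebra.smul_def, map_sub, map_one, ← sub_eq_zero, ← h]
  simp only [add_mul, mul_sub, sub_mul, one_mul, Algebra.commutes]
  abel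

namespace CoxeterSystem

variable [Ring H] [Algebra ℤ[X] H] (cs : CoxeterSystem M W)

local prefix:100 "ℓ" => cs.length
local prefix:100 "s" => cs.simple

structure IsHeckeFamily (T : W → H) : Prop where
  mul_of_length_add : ∀ y y', ℓ (y * y') = ℓ y + ℓ y' → T y * T y' = T (y * y')
  quadratic : ∀ i, (T (s i) + 1) * (T (s i) - algebraMap ℤ[X] H X) = 0

variable {cs} {T : W → H}

theorem IsHeckeFamily.simple_mul_of_length_eq (hT : cs.IsHeckeFamily T) {i : B} {x : W}
    (h : ℓ (s i * x) = ℓ x + 1) : T (s i) * T x = T (s i * x) :=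
  hT.mul_of_length_add _ _ (by rw [h, cs.length_simple, add_comm])

theorem IsHeckeFamily.simple_mul_of_length_add_one_eq (hT : cs.IsHeckeFamily T) {i : B} {x : W}
    (h : ℓ (s i * x) + 1 = ℓ x) :
    T (s i) * T x = (X : ℤ[X]) • T (s i * x) + (X - 1 : ℤ[X]) • T x := by
  have hx : T (s i) * T (s i * x) = T x := by
    rw [hT.simple_mul_of_length_eq (by rwa [cs.simple_mul_simple_cancel_left, eq_comm]),
      cs.simple_mul_simple_cancel_left]
  rw [← hx, ← mul_assoc, mul_self_eq_of_mul_sub_algebraMap_eq_zero (hT.quadratic i), add_mul,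
    smul_mul_assoc, ← Algebra.smul_def, add_comm]

end CoxeterSystem

namespace InfiniteDihedral

def mirror : Fin 2 → ℤ := ![-1, 1]

@[simp] theorem mirror_zero : mirror 0 = -1 := rfl

@[simp] theorem mirror_one : mirror 1 = 1 := rfl

theorem mirror_eq_neg_one_or_one (i : Fin 2) : mirror i = -1 ∨ mirror i = 1 := by
  fin_cases i <;> simp

theorem mirror_eq_neg_of_ne {i j : Fin 2} (h : i ≠ j) : mirror j = -mirror i := by
  fin_cases i <;> fin_cases j <;> simp_all

theorem isLiftable_subLeft_mirror {M : CoxeterMatrix (Fin 2)} (hM : M 0 1 = 0) :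
    M.IsLiftable fun i ↦ Equiv.subLeft (mirror i) := by
  intro i j
  by_cases hij : i = j
  · subst hij
    ext t
    simp
  · have : M i j = 0 := by
      fin_cases i <;> fin_cases j <;> simp_all [M.symmetric 1 0]
    simp [this]

section Alcove

variable {M : CoxeterMatrix (Fin 2)} (cs : CoxeterSystem M W) (hM : M 0 1 = 0)

local prefix:100 "ℓ" => cs.length
local prefix:100 "s" => cs.simple

noncomputable def alcove (x : W) : ℤ :=
  cs.lift ⟨_, isLiftable_subLeft_mirror hM⟩ x 0

theorem alcove_one : alcove cs hM 1 = 0 := by simp [alcove]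

theorem alcove_simple_mul (i : Fin 2) (x : W) :
    alcove cs hM (s i * x) = mirror i - alcove cs hM x := by
  simp [alcove]

/-- The descent clause is what carries the induction on `ℓ x`. -/
theorem length_eq_natAbs_alcove_and_descent (x : W) :
    ℓ x = (alcove cs hM x).natAbs ∧
      ∀ i, 0 < mirror i * alcove cs hM x → ℓ (s i * x) < ℓ x := by
  induction hn : ℓ x using Nat.strong_induction_on generalizing x with
  | _ n ih =>
  subst hn
  rcases eq_or_ne x 1 with rfl | hx
  · simp [alcove_one]
  obtain ⟨i, hi⟩ := cs.exists_leftDescent_of_ne_one hx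
  set y := s i * x
  have hxy : x = s i * y := (cs.simple_mul_simple_cancel_left i).symm
  have hly : ℓ y + 1 = ℓ x := cs.isLeftDescent_iff.mp hi
  obtain ⟨hy_len, hy_desc⟩ := ih _ (by omega) y rfl
  have hy_asc : mirror i * alcove cs hM y ≤ 0 := by
    by_contra! h
    have := hy_desc i h
    rw [← hxy] at this
    omega
  have hax : alcove cs hM x = mirror i - alcove cs hM y := by
    rw [hxy, alcove_simple_mul]
  refine ⟨?_, fun j hj ↦ ?_⟩
  · rcases mirror_eq_neg_one_or_one i with h | h <;> rw [h] at hy_asc hax <;> omega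
  · rcases eq_or_ne i j with rfl | hij
    · show ℓ y < ℓ x
      omega
    · rcases mirror_eq_neg_one_or_one i with h | h <;>
        rw [mirror_eq_neg_of_ne hij, h] at hj <;> rw [h] at hy_asc hax <;> omega

theorem length_eq_natAbs_alcove (x : W) : ℓ x = (alcove cs hM x).natAbs :=
  (length_eq_natAbs_alcove_and_descent cs hM x).1

theorem length_simple_mul_of_nonpos {i : Fin 2} {x : W} (h : mirror i * alcove cs hM x ≤ 0) :
    ℓ (s i * x) = ℓ x + 1 := by
  rw [length_eq_natAbs_alcove cs hM, length_eq_natAbs_alcove cs hM, alcove_simple_mul]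
  rcases mirror_eq_neg_one_or_one i with hi | hi <;> rw [hi] at h ⊢ <;> omega

theorem length_simple_mul_of_pos {i : Fin 2} {x : W} (h : 0 < mirror i * alcove cs hM x) :
    ℓ (s i * x) + 1 = ℓ x := by
  rw [length_eq_natAbs_alcove cs hM, length_eq_natAbs_alcove cs hM, alcove_simple_mul]
  rcases mirror_eq_neg_one_or_one i with hi | hi <;> rw [hi] at h ⊢ <;> omega

theorem alcove_pow_simple_mul_simple (j : ℕ) :
    alcove cs hM ((s 0 * s 1) ^ j) = -2 * j := by
  induction j with
  | zero => simp [alcove_one]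
  | succ j ih =>
    rw [pow_succ', mul_assoc, alcove_simple_mul, alcove_simple_mul, ih, mirror_zero, mirror_one]
    push_cast
    ring

end Alcove

section Filtration

variable [Ring H] [Algebra ℤ[X] H] {M : CoxeterMatrix (Fin 2)} (cs : CoxeterSystem M W)
  (hM : M 0 1 = 0) (T : W → H)

local prefix:100 "s" => cs.simple

noncomputable def alcoveFiltration (m : ℤ) : Submodule ℤ[X] H :=
  Submodule.span ℤ[X] (T '' {u | alcove cs hM u < m})

variable {cs hM T}

theorem mem_alcoveFiltration {u : W} {m : ℤ} (h : alcove cs hM u < m) :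
    T u ∈ alcoveFiltration cs hM T m :=
  Submodule.subset_span ⟨u, h, rfl⟩

theorem alcoveFiltration_mono : Monotone (alcoveFiltration cs hM T) := fun _ _ h ↦
  Submodule.span_mono (Set.image_mono fun _ hu ↦ lt_of_lt_of_le hu h)

theorem hecke_simple_mul_mem_alcoveFiltration (hT : cs.IsHeckeFamily T) {i : Fin 2}
    {x : W} {m : ℤ} (hasc : mirror i - alcove cs hM x < m)
    (hdesc : 0 < mirror i * alcove cs hM x → alcove cs hM x < m) :
    T (s i) * T x ∈ alcoveFiltration cs hM T m := by
  rcases le_or_gt (mirror i * alcove cs hM x) 0 with hx | hx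
  · rw [hT.simple_mul_of_length_eq (length_simple_mul_of_nonpos cs hM hx)]
    exact mem_alcoveFiltration (by rwa [alcove_simple_mul])
  · rw [hT.simple_mul_of_length_add_one_eq (length_simple_mul_of_pos cs hM hx)]
    exact add_mem (Submodule.smul_mem _ _ (mem_alcoveFiltration (by rwa [alcove_simple_mul])))
      (Submodule.smul_mem _ _ (mem_alcoveFiltration (hdesc hx)))

theorem hecke_simple_mul_simple_mul_mem_alcoveFiltration (hT : cs.IsHeckeFamily T)
    (x : W) : T (s 0) * (T (s 1) * T x) ∈ alcoveFiltration cs hM T (alcove cs hM x) := by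
  have hbx : alcove cs hM (s 1 * x) = 1 - alcove cs hM x := by rw [alcove_simple_mul, mirror_one]
  have hmem : ∀ y, -1 - alcove cs hM y < alcove cs hM x →
      (alcove cs hM y < 0 → alcove cs hM y < alcove cs hM x) →
      T (s 0) * T y ∈ alcoveFiltration cs hM T (alcove cs hM x) := fun y h₁ h₂ ↦
    hecke_simple_mul_mem_alcoveFiltration hT (by rwa [mirror_zero]) (by rw [mirror_zero]; omega)
  rcases le_or_gt (alcove cs hM x) 0 with hx | hx
  · have hasc := length_simple_mul_of_nonpos cs hM (i := 1) (by rwa [mirror_one, one_mul])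
    rw [hT.simple_mul_of_length_eq hasc]
    exact hmem _ (by omega) (by omega)
  · have hdesc := length_simple_mul_of_pos cs hM (i := 1) (by rwa [mirror_one, one_mul])
    rw [hT.simple_mul_of_length_add_one_eq hdesc, mul_add, mul_smul_comm, mul_smul_comm]
    exact add_mem (Submodule.smul_mem _ _ (hmem _ (by omega) (by omega)))
      (Submodule.smul_mem _ _ (hmem _ (by omega) (by omega)))

theorem hecke_simple_mul_simple_mul_mem_of_mem (hT : cs.IsHeckeFamily T) {h : H} {m : ℤ}
    (hh : h ∈ alcoveFiltration cs hM T m) :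
    T (s 0) * (T (s 1) * h) ∈ alcoveFiltration cs hM T m := by
  have hle : alcoveFiltration cs hM T m ≤
      (alcoveFiltration cs hM T m).comap (LinearMap.mulLeft ℤ[X] (T (s 0) * T (s 1))) :=
    Submodule.span_le.2 <| by
      rintro _ ⟨u, hu, rfl⟩
      simpa [mul_assoc] using
        alcoveFiltration_mono hu.le (hecke_simple_mul_simple_mul_mem_alcoveFiltration hT u)
  simpa [mul_assoc] using hle hh

theorem hecke_pow_succ (hT : cs.IsHeckeFamily T) (hM : M 0 1 = 0) (j : ℕ) :
    T ((s 0 * s 1) ^ (j + 1)) = T (s 0) * (T (s 1) * T ((s 0 * s 1) ^ j)) := by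
  have hj := alcove_pow_simple_mul_simple cs hM j
  have hb := length_simple_mul_of_nonpos cs hM (i := 1) (x := (s 0 * s 1) ^ j)
    (by rw [mirror_one]; omega)
  have ha := length_simple_mul_of_nonpos cs hM (i := 0) (x := s 1 * (s 0 * s 1) ^ j)
    (by rw [alcove_simple_mul, mirror_zero, mirror_one]; omega)
  rw [hT.simple_mul_of_length_eq hb, hT.simple_mul_of_length_eq ha,
    ← mul_assoc, ← pow_succ']

theorem hecke_pow_succ_mul_mem_alcoveFiltration (hT : cs.IsHeckeFamily T) (j : ℕ) (z : W) :
    T ((s 0 * s 1) ^ (j + 1)) * T z ∈ alcoveFiltration cs hM T (alcove cs hM z) := by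
  induction j with
  | zero =>
    rw [hecke_pow_succ hT hM, pow_zero, hT.mul_of_length_add (s 1) 1 (by simp), mul_one, mul_assoc]
    exact hecke_simple_mul_simple_mul_mem_alcoveFiltration hT z
  | succ j ih =>
    rw [hecke_pow_succ hT hM, mul_assoc, mul_assoc]
    exact hecke_simple_mul_simple_mul_mem_of_mem hT ih

end Filtration

end InfiniteDihedral

open InfiniteDihedral in
theorem stmt_7_general {W H : Type*} [Group W] {M : CoxeterMatrix (Fin 2)} (hM : M 0 1 = 0)
    (cs : CoxeterSystem M W)
    [Ring H] [Algebra (Polynomial ℤ) H] (T : Module.Basis W (Polynomial ℤ) H)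
    (hmul : ∀ y y' : W, cs.length (y * y') = cs.length y + cs.length y' →
      T y * T y' = T (y * y'))
    (hquad : ∀ i : Fin 2, (T (cs.simple i) + 1) *
      (T (cs.simple i) - algebraMap (Polynomial ℤ) H X) = 0)
    (k : ℕ) (hk : 1 ≤ k) (w : W)
    (hw : w = (cs.simple 0 * cs.simple 1) ^ k) (z : W) :
    heckeN T w z z = 0 := by
  obtain ⟨j, rfl⟩ : ∃ j, k = j + 1 := ⟨k - 1, by omega⟩
  have hmem : T w * T z ∈ alcoveFiltration cs hM T (alcove cs hM z) :=
    hw ▸ hecke_pow_succ_mul_mem_alcoveFiltration ⟨hmul, hquad⟩ j z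
  exact Finsupp.notMem_support_iff.1 fun hz ↦
    lt_irrefl (alcove cs hM z) ((Module.Basis.mem_span_image T).1 hmem hz)

/-- In the infinite dihedral Coxeter group (off-diagonal Coxeter matrix entry `0`,
meaning infinite order), for `w = (s₁ s₂)^k` with `k ≥ 1`, the set `𝔈(w)` is empty:
`N_{w,z,z} = 0` for all `z`. -/
theorem stmt_7 {W H : Type*} [Group W] {M : CoxeterMatrix (Fin 2)} (hM : M 0 1 = 0)
    (cs : CoxeterSystem M W)
    [Ring H] [Algebra (Polynomial ℤ) H] (T : Module.Basis W (Polynomial ℤ) H)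
    (hone : T 1 = 1)
    (hmul : ∀ y y' : W, cs.length (y * y') = cs.length y + cs.length y' →
      T y * T y' = T (y * y'))
    (hquad : ∀ i : Fin 2, (T (cs.simple i) + 1) *
      (T (cs.simple i) - algebraMap (Polynomial ℤ) H X) = 0)
    (k : ℕ) (hk : 1 ≤ k) (w : W)
    (hw : w = (cs.simple 0 * cs.simple 1) ^ k) (z : W) :
    heckeN T w z z = 0 :=
  stmt_7_general hM cs T hmul hquad k hk w hw z
end

section
/- Let W be the infinite dihedral Coxeter group with generators s₁, s₂ and w = s₁s₂s₁. Then d(w) := max over z ∈ 𝔈(w) of deg N_{w,z,z} equals 2, which is strictly less than l(w) = 3. -/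
/-
The infinite dihedral group acts on the alcoves `ℤ` of the line, and the length of `z` is the
distance `|z • 0|` of its alcove from the fundamental one; in particular no
element has both `s₀` and `s₁` as left descents. In the standard basis, the `T z`-coordinate of
`T s * h` involves only the `T z`- and `T (s z)`-coordinates of `h`, so the coefficient of `T z`
in `T s₀ (T s₁ (T s₀ T z))` is a sum over paths `z → · → · → z`. Without double descents the only
surviving path is `z → s₀ z → s₀ z → z`: it contributes `q (q - 1)` exactly when `s₁` is a left
descent of `s₀ z` (for instance `z = s₀ s₁`), and nothing otherwise.
-/

open Polynomial

variable {B W H : Type*} [Group W] {M : CoxeterMatrix B}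

namespace CoxeterSystem

section Descent

variable (cs : CoxeterSystem M W)

lemma simple_ne_one (i : B) : cs.simple i ≠ 1 := fun h => by
  simpa [h] using cs.length_simple i

lemma isLeftDescent_simple (i : B) : cs.IsLeftDescent (cs.simple i) i := by
  simp [IsLeftDescent, simple_mul_simple_self]

lemma isLeftDescent_simple_mul_iff {w : W} {i : B} :
    cs.IsLeftDescent (cs.simple i * w) i ↔ ¬cs.IsLeftDescent w i :=
  iff_not_comm.mp cs.isLeftDescent_iff_not_isLeftDescent_mul

end Descent

section InfiniteDihedral

variable {M : CoxeterMatrix (Fin 2)}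

/-- `ℤ` indexes the alcoves of the real line cut at the half-integers; `s₀` and `s₁` act as the
reflections `k ↦ -1 - k` and `k ↦ 1 - k` in the two walls `∓1/2` of the alcove `0`. -/
def alcoveReflection (i : Fin 2) : Equiv.Perm ℤ := Equiv.subLeft (![-1, 1] i)

lemma isLiftable_alcoveReflection (hM : M 0 1 = 0) : M.IsLiftable alcoveReflection := by
  intro i j
  by_cases hij : i = j
  · subst hij
    rw [M.diagonal, pow_one]
    ext x
    simp [alcoveReflection, Equiv.Perm.mul_apply]
  · have hMij : M i j = 0 := by
      fin_cases i <;> fin_cases j <;> simp_all [M.symmetric 1 0]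
    rw [hMij, pow_zero]

variable (hM : M 0 1 = 0) (cs : CoxeterSystem M W)

def alcove (z : W) : ℤ := cs.lift ⟨alcoveReflection, isLiftable_alcoveReflection hM⟩ z 0

@[simp]
lemma alcove_one : alcove hM cs 1 = 0 := by simp [alcove]

@[simp]
lemma alcove_simple_mul (i : Fin 2) (z : W) :
    alcove hM cs (cs.simple i * z) = ![-1, 1] i - alcove hM cs z := by
  simp [alcove, Equiv.Perm.mul_apply, alcoveReflection]

@[simp]
lemma alcove_simple (i : Fin 2) : alcove hM cs (cs.simple i) = ![-1, 1] i := by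
  simpa using alcove_simple_mul hM cs i 1

theorem length_eq_natAbs_alcove (z : W) : cs.length z = (alcove hM cs z).natAbs := by
  induction hn : cs.length z using Nat.strong_induction_on generalizing z with
  | _ n ih =>
    rcases eq_or_ne z 1 with rfl | hz
    · simp_all
    obtain ⟨i, hi⟩ := cs.exists_leftDescent_of_ne_one hz
    rw [isLeftDescent_iff] at hi
    rcases eq_or_ne (cs.simple i * z) 1 with hz₁ | hz₁
    · obtain rfl : z = cs.simple i := by rw [eq_inv_of_mul_eq_one_right hz₁, inv_simple]
      rw [← hn, cs.length_simple, alcove_simple]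
      fin_cases i <;> rfl
    obtain ⟨j, hj⟩ := cs.exists_leftDescent_of_ne_one hz₁
    rw [isLeftDescent_iff] at hj
    have hij : i ≠ j := by
      rintro rfl
      rw [simple_mul_simple_cancel_left] at hj
      omega
    have h₁ := ih _ (by omega) (cs.simple i * z) rfl
    have h₂ := ih _ (by omega) (cs.simple j * (cs.simple i * z)) rfl
    rw [alcove_simple_mul] at h₁
    rw [alcove_simple_mul, alcove_simple_mul] at h₂
    -- `sⱼ` moved the alcove of `sⱼ sᵢ z` away from `0`, to that of `sᵢ z`, which lies on the
    -- side where `sᵢ ≠ sⱼ` moves it further away.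
    fin_cases i <;> fin_cases j <;> simp_all <;> omega

include hM in
theorem not_isLeftDescent_zero_and_one (z : W) :
    ¬(cs.IsLeftDescent z 0 ∧ cs.IsLeftDescent z 1) := by
  simp only [IsLeftDescent, length_eq_natAbs_alcove hM cs, alcove_simple_mul,
    Matrix.cons_val_zero, Matrix.cons_val_one, Matrix.cons_val_fin_one]
  omega

include hM in
lemma length_simple_one_mul_simple_zero : cs.length (cs.simple 1 * cs.simple 0) = 2 := by
  simp [length_eq_natAbs_alcove hM cs]

include hM in
lemma length_simple_zero_mul_simple_one_mul_simple_zero :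
    cs.length (cs.simple 0 * cs.simple 1 * cs.simple 0) = 3 := by
  simp [length_eq_natAbs_alcove hM cs, mul_assoc]

end InfiniteDihedral

section Hecke

variable (cs : CoxeterSystem M W) [Ring H] [Algebra ℤ[X] H] (T : Module.Basis W ℤ[X] H)
  (hmul : ∀ y y' : W, cs.length (y * y') = cs.length y + cs.length y' →
    T y * T y' = T (y * y'))
  (hquad : ∀ i : B, (T (cs.simple i) + 1) * (T (cs.simple i) - algebraMap ℤ[X] H X) = 0)

include hmul in
lemma basis_simple_mul_of_not_isLeftDescent {z : W} {i : B} (h : ¬cs.IsLeftDescent z i) :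
    T (cs.simple i) * T z = T (cs.simple i * z) :=
  hmul _ _ (by rw [cs.not_isLeftDescent_iff.mp h, cs.length_simple, add_comm])

include hquad in
lemma basis_simple_mul_self (i : B) :
    T (cs.simple i) * T (cs.simple i) = (X - 1 : ℤ[X]) • T (cs.simple i) + (X : ℤ[X]) • 1 := by
  have h := hquad i
  rw [Algebra.algebraMap_eq_smul_one] at h
  simp only [add_mul, mul_sub, one_mul, mul_smul_comm, mul_one] at h
  linear_combination (norm := module) h

include hmul hquad in
lemma basis_simple_mul_of_isLeftDescent {z : W} {i : B} (h : cs.IsLeftDescent z i) :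
    T (cs.simple i) * T z = (X : ℤ[X]) • T (cs.simple i * z) + (X - 1 : ℤ[X]) • T z := by
  have hz : T (cs.simple i) * T (cs.simple i * z) = T z := by
    rw [basis_simple_mul_of_not_isLeftDescent cs T hmul
      (cs.isLeftDescent_iff_not_isLeftDescent_mul.mp h), simple_mul_simple_cancel_left]
  rw [← hz, ← mul_assoc, basis_simple_mul_self cs T hquad, add_mul, smul_mul_assoc,
    smul_mul_assoc, one_mul, hz, add_comm]

include hmul hquad in
open scoped Classical in
lemma repr_simple_mul_basis (i : B) (x z : W) :
    T.repr (T (cs.simple i) * T x) z =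
      if cs.IsLeftDescent z i then T.repr (T x) (cs.simple i * z) + (X - 1) * T.repr (T x) z
      else X * T.repr (T x) (cs.simple i * z) := by
  have hsx : cs.simple i * x = z ↔ x = cs.simple i * z := by
    constructor <;> rintro rfl <;> rw [simple_mul_simple_cancel_left]
  have := cs.simple_ne_one i
  have := cs.isLeftDescent_simple_mul_iff (w := z) (i := i)
  by_cases hx : cs.IsLeftDescent x i
  · rw [basis_simple_mul_of_isLeftDescent cs T hmul hquad hx]
    simp only [map_add, map_smul, T.repr_self, Finsupp.add_apply, Finsupp.smul_apply,
      Finsupp.single_apply, hsx, smul_eq_mul]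
    split_ifs <;> simp_all
  · rw [basis_simple_mul_of_not_isLeftDescent cs T hmul hx]
    simp only [T.repr_self, Finsupp.single_apply, hsx]
    split_ifs <;> simp_all

include hmul hquad in
open scoped Classical in
theorem repr_simple_mul (i : B) (h : H) (z : W) :
    T.repr (T (cs.simple i) * h) z =
      if cs.IsLeftDescent z i then T.repr h (cs.simple i * z) + (X - 1) * T.repr h z
      else X * T.repr h (cs.simple i * z) := by
  have basis_case := repr_simple_mul_basis cs T hmul hquad i
  split_ifs with hz
  · refine LinearMap.congr_fun (T.ext fun x => ?_) h
      (f := Finsupp.lapply z ∘ₗ T.repr.toLinearMap ∘ₗ LinearMap.mulLeft ℤ[X] (T (cs.simple i)))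
      (g := (Finsupp.lapply (cs.simple i * z) + (X - 1 : ℤ[X]) • Finsupp.lapply z) ∘ₗ
        T.repr.toLinearMap)
    simpa [hz] using basis_case x z
  · refine LinearMap.congr_fun (T.ext fun x => ?_) h
      (f := Finsupp.lapply z ∘ₗ T.repr.toLinearMap ∘ₗ LinearMap.mulLeft ℤ[X] (T (cs.simple i)))
      (g := (X : ℤ[X]) • Finsupp.lapply (cs.simple i * z) ∘ₗ T.repr.toLinearMap)
    simpa [hz] using basis_case x z

include hmul hquad in
open scoped Classical in
theorem repr_simple_mul_simple_mul_simple_mul_self {i j : B}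
    (hfree : ∀ z : W, ¬(cs.IsLeftDescent z i ∧ cs.IsLeftDescent z j)) (z : W) :
    T.repr (T (cs.simple i) * (T (cs.simple j) * (T (cs.simple i) * T z))) z =
      if cs.IsLeftDescent (cs.simple i * z) j then X * (X - 1) else 0 := by
  have hij : cs.simple i ≠ cs.simple j := fun h =>
    hfree _ ⟨cs.isLeftDescent_simple i, h ▸ cs.isLeftDescent_simple j⟩
  have hij' : cs.simple i * cs.simple j ≠ 1 := fun h =>
    hij (by rw [mul_eq_one_iff_eq_inv.mp h, inv_simple])
  have hji : cs.simple j * cs.simple i ≠ 1 := fun h =>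
    hij (by rw [mul_eq_one_iff_eq_inv.mp h, inv_simple])
  have hiji : cs.simple i * cs.simple j * cs.simple i ≠ 1 := fun h => cs.simple_ne_one j <| by
    simpa [mul_assoc, simple_mul_simple_cancel_left] using
      congrArg (cs.simple i * · * cs.simple i) h
  simp only [repr_simple_mul cs T hmul hquad, T.repr_self, Finsupp.single_apply]
  simp only [← mul_assoc, right_eq_mul, simple_mul_simple_self, one_mul, mul_one, simple_ne_one,
    hij', hji, hiji, isLeftDescent_simple_mul_iff, ↓reduceIte, ite_self, ite_not, mul_ite,
    mul_zero, add_zero, zero_add]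
  have := hfree z
  split_ifs <;> first | exact (this ⟨‹_›, ‹_›⟩).elim | ring

end Hecke

end CoxeterSystem

theorem stmt_9_general {W H : Type*} [Group W] {M : CoxeterMatrix (Fin 2)} (hM : M 0 1 = 0)
    (cs : CoxeterSystem M W)
    [Ring H] [Algebra (Polynomial ℤ) H] (T : Module.Basis W (Polynomial ℤ) H)
    (hmul : ∀ y y' : W, cs.length (y * y') = cs.length y + cs.length y' →
      T y * T y' = T (y * y'))
    (hquad : ∀ i : Fin 2, (T (cs.simple i) + 1) *
      (T (cs.simple i) - algebraMap (Polynomial ℤ) H X) = 0)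
    (w : W) (hw : w = cs.simple 0 * cs.simple 1 * cs.simple 0) :
    (∀ z : W, heckeN T w z z ≠ 0 → (heckeN T w z z).natDegree ≤ 2) ∧
    (∃ z : W, heckeN T w z z ≠ 0 ∧ (heckeN T w z z).natDegree = 2) ∧
    cs.length w = 3 := by
  classical
  have hTw : T w = T (cs.simple 0) * (T (cs.simple 1) * T (cs.simple 0)) := by
    rw [hmul _ _ (by simp [cs.length_simple, cs.length_simple_one_mul_simple_zero hM]), hmul, hw,
      mul_assoc]
    simp [cs.length_simple, ← mul_assoc, cs.length_simple_zero_mul_simple_one_mul_simple_zero hM,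
      cs.length_simple_one_mul_simple_zero hM]
  have hN (z : W) : heckeN T w z z =
      if cs.IsLeftDescent (cs.simple 0 * z) 1 then (X * (X - 1) : ℤ[X]) else 0 := by
    rw [heckeN, hTw, mul_assoc, mul_assoc]
    exact cs.repr_simple_mul_simple_mul_simple_mul_self T hmul hquad
      (cs.not_isLeftDescent_zero_and_one hM) z
  have hdeg : (X * (X - 1) : ℤ[X]).natDegree = 2 := by compute_degree!
  refine ⟨fun z hz => ?_, ⟨cs.simple 0 * cs.simple 1, ?_⟩,
    hw ▸ cs.length_simple_zero_mul_simple_one_mul_simple_zero hM⟩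
  · rw [hN] at hz ⊢
    split_ifs at hz ⊢
    · exact hdeg.le
    · exact absurd rfl hz
  · rw [hN, cs.simple_mul_simple_cancel_left, if_pos (cs.isLeftDescent_simple 1), hdeg]
    exact ⟨ne_zero_of_natDegree_gt (n := 0) (by rw [hdeg]; norm_num), rfl⟩

/-- In the infinite dihedral Coxeter group, for `w = s₁s₂s₁` one has
`d(w) = max_{z ∈ 𝔈(w)} deg N_{w,z,z} = 2 < 3 = l(w)`. -/
theorem stmt_9 {W H : Type*} [Group W] {M : CoxeterMatrix (Fin 2)} (hM : M 0 1 = 0)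
    (cs : CoxeterSystem M W)
    [Ring H] [Algebra (Polynomial ℤ) H] (T : Module.Basis W (Polynomial ℤ) H)
    (hone : T 1 = 1)
    (hmul : ∀ y y' : W, cs.length (y * y') = cs.length y + cs.length y' →
      T y * T y' = T (y * y'))
    (hquad : ∀ i : Fin 2, (T (cs.simple i) + 1) *
      (T (cs.simple i) - algebraMap (Polynomial ℤ) H X) = 0)
    (w : W) (hw : w = cs.simple 0 * cs.simple 1 * cs.simple 0) :
    (∀ z : W, heckeN T w z z ≠ 0 → (heckeN T w z z).natDegree ≤ 2) ∧
    (∃ z : W, heckeN T w z z ≠ 0 ∧ (heckeN T w z z).natDegree = 2) ∧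
    cs.length w = 3 :=
  stmt_9_general hM cs T hmul hquad w hw
end
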